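/- If a ≤ω-semigroup S (a partial infinitary semigroup in which all products over nonempty well-ordered index sets of order type at most ω are defined) has a neutral element e for the binary operation with ∏_{n∈ω} e = e, then no element a ≠ e has a two-sided inverse: there is no b with a*b = e = b*a. -/

import Mathlib

/-!
An Eilenberg–Mazur swindle. Let `x = a b a b ⋯` and `s = ∏ x`. Grouping `x` into the
pairs `(ab)(ab)⋯` gives `s = ∏_{n∈ω} e = e`. Splitting off the first letter gives
`s = a * ∏ (b a b a ⋯)`, and grouping the tail into pairs `(ba)(ba)⋯` shows that the tail
also has product `e`; hence `s = a * e = a`, so `a = e`.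
-/

/-- A partial infinitary semigroup: a type `S` with a partial product
(`none` = undefined) on sequences indexed by linearly ordered types, satisfying
(U) singleton products are defined and equal the unique entry, and
(N) generalized associativity under surjective order-preserving maps. -/
structure PartialInfSemigroup (S : Type) : Type 1 where
  prod : ∀ (I : Type) [LinearOrder I], (I → S) → Option S
  unit : ∀ (I : Type) [LinearOrder I] (a : I → S) (i : I),
      (∀ j, j = i) → prod I a = some (a i)
  assoc : ∀ (I J : Type) [LinearOrder I] [LinearOrder J] (a : I → S) (π : I → J),
      Function.Surjective π → Monotone π → ∀ s : S, prod I a = some s →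
      ∃ p : J → S,
        (∀ j : J, prod {i : I // π i = j} (fun i => a i.1) = some (p j)) ∧
        prod J p = some s

namespace PartialInfSemigroup

variable {S : Type} (P : PartialInfSemigroup S)

lemma prod_eq_of_fibers {I J : Type} [LinearOrder I] [LinearOrder J] {a : I → S}
    {π : I → J} (hsurj : Function.Surjective π) (hmono : Monotone π) {p : J → S}
    (hp : ∀ j, P.prod {i : I // π i = j} (fun i => a i.1) = some (p j))
    {s : S} (h : P.prod I a = some s) : P.prod J p = some s := by
  obtain ⟨p', hp', hp's⟩ := P.assoc I J a π hsurj hmono s h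
  have : p' = p := funext fun j => Option.some_inj.mp ((hp' j).symm.trans (hp j))
  rwa [this] at hp's

lemma prod_comp_orderIso_symm_of_eq {I J : Type} [LinearOrder I] [LinearOrder J]
    (f : I ≃o J) {c : I → S} {s : S} (h : P.prod I c = some s) :
    P.prod J (c ∘ f.symm) = some s := by
  refine P.prod_eq_of_fibers f.surjective f.monotone (fun j => ?_) h
  exact P.unit {i // f i = j} _ ⟨f.symm j, by simp⟩ fun ⟨i, hi⟩ => Subtype.ext (by simp [← hi])

lemma prod_comp_orderIso {I J : Type} [LinearOrder I] [LinearOrder J] (f : I ≃o J)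
    (c : J → S) : P.prod I (c ∘ f) = P.prod J c := by
  cases hc : P.prod J c with
  | some s => simpa [Function.comp_assoc] using P.prod_comp_orderIso_symm_of_eq f.symm hc
  | none =>
    cases hcf : P.prod I (c ∘ f) with
    | none => rfl
    | some s =>
      have := P.prod_comp_orderIso_symm_of_eq f hcf
      simp [Function.comp_def, hc] at this

lemma prod_of_two {I : Type} [LinearOrder I] {i₀ i₁ : I} (hlt : i₀ < i₁)
    (hI : ∀ i, i = i₀ ∨ i = i₁) (c : I → S) :
    P.prod I c = P.prod (Fin 2) ![c i₀, c i₁] := by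
  have hmono : StrictMono ![i₀, i₁] := by
    intro k l hkl
    fin_cases k <;> fin_cases l <;> simp_all
  have hsurj : Function.Surjective ![i₀, i₁] := by
    intro i
    rcases hI i with rfl | rfl
    exacts [⟨0, rfl⟩, ⟨1, rfl⟩]
  rw [← P.prod_comp_orderIso (hmono.orderIsoOfSurjective _ hsurj)]
  congr 1
  funext k
  fin_cases k <;> rfl

lemma prod_pairs {x : ℕ → S} {s : S} (hx : P.prod ℕ x = some s) {y : ℕ → S}
    (hy : ∀ n, P.prod (Fin 2) ![x (2 * n), x (2 * n + 1)] = some (y n)) :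
    P.prod ℕ y = some s := by
  refine P.prod_eq_of_fibers (π := (· / 2)) (fun n => ⟨2 * n, by dsimp only; omega⟩)
    (fun _ _ h => Nat.div_le_div_right h) (fun n => ?_) hx
  rw [P.prod_of_two (i₀ := ⟨2 * n, by omega⟩) (i₁ := ⟨2 * n + 1, by omega⟩)
    (Subtype.mk_lt_mk.mpr (by omega)) (fun ⟨i, hi⟩ => by simp only [Subtype.mk.injEq]; omega)]
  exact hy n

lemma prod_head_tail {x : ℕ → S} {s t : S} (hx : P.prod ℕ x = some s)
    (ht : P.prod ℕ (fun n => x (n + 1)) = some t) :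
    P.prod (Fin 2) ![x 0, t] = some s := by
  let π : ℕ → Fin 2 := fun n => if n = 0 then 0 else 1
  have hmono : Monotone π := by
    intro m n hmn
    by_cases hm : m = 0
    · simp [π, hm]
    · simp [π, hm, show n ≠ 0 by omega]
  have hsurj : Function.Surjective π := by
    intro k
    fin_cases k
    exacts [⟨0, rfl⟩, ⟨1, rfl⟩]
  refine P.prod_eq_of_fibers hsurj hmono (Fin.forall_fin_two.mpr ⟨?_, ?_⟩) hx
  · exact P.unit {i // π i = 0} _ ⟨0, rfl⟩ fun ⟨i, hi⟩ =>
      Subtype.ext (by by_contra h; simp [π, h] at hi)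
  · have hsucc : StrictMono (fun n : ℕ => (⟨n + 1, rfl⟩ : {i : ℕ // π i = 1})) :=
      fun m n h => Subtype.mk_lt_mk.mpr (by omega)
    have hsurj' : Function.Surjective (fun n : ℕ => (⟨n + 1, rfl⟩ : {i : ℕ // π i = 1})) := by
      rintro ⟨i, hi⟩
      have : i ≠ 0 := by rintro rfl; simp [π] at hi
      exact ⟨i - 1, Subtype.ext (by simp only; omega)⟩
    rw [← P.prod_comp_orderIso (hsucc.orderIsoOfSurjective _ hsurj')]
    exact ht

end PartialInfSemigroup

theorem stmt5_general {S : Type} (P : PartialInfSemigroup S)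
    (homega : ∀ x : ℕ → S, ∃ s : S, P.prod ℕ x = some s)
    (e : S)
    (hneut : ∀ x : S, P.prod (Fin 2) ![x, e] = some x ∧ P.prod (Fin 2) ![e, x] = some x)
    (he : P.prod ℕ (fun _ => e) = some e)
    (a : S) (ha : a ≠ e) (b : S) :
    ¬(P.prod (Fin 2) ![a, b] = some e ∧ P.prod (Fin 2) ![b, a] = some e) := by
  rintro ⟨hab, hba⟩
  let x : ℕ → S := fun n => if Even n then a else b
  obtain ⟨s, hs⟩ := homega x
  obtain ⟨t, ht⟩ := homega fun n => x (n + 1)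
  have hse : s = e := by
    have := P.prod_pairs hs (y := fun _ => e) fun n => by simpa [x, parity_simps] using hab
    exact Option.some_inj.mp (this.symm.trans he)
  have hte : t = e := by
    have := P.prod_pairs ht (y := fun _ => e) fun n => by simpa [x, parity_simps] using hba
    exact Option.some_inj.mp (this.symm.trans he)
  have hsa : s = a := by
    have := P.prod_head_tail hs ht
    simp only [x, hte, Even.zero, if_true] at this
    exact Option.some_inj.mp (this.symm.trans (hneut a).1)
  exact ha (hsa.symm.trans hse)

/-- In a ≤ω-semigroup (all products over nonempty well-ordered index sets of order
type at most ω are defined) with a neutral element `e` satisfying `∏_{n∈ω} e = e`,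
no element distinct from `e` has a two-sided inverse. -/
theorem stmt5 {S : Type} (P : PartialInfSemigroup S)
    (hfin : ∀ (I : Type) [LinearOrder I] [Finite I] [Nonempty I] (x : I → S),
      ∃ s : S, P.prod I x = some s)
    (homega : ∀ x : ℕ → S, ∃ s : S, P.prod ℕ x = some s)
    (e : S)
    (hneut : ∀ x : S, P.prod (Fin 2) ![x, e] = some x ∧ P.prod (Fin 2) ![e, x] = some x)
    (he : P.prod ℕ (fun _ => e) = some e)
    (a : S) (ha : a ≠ e) (b : S) :
    ¬(P.prod (Fin 2) ![a, b] = some e ∧ P.prod (Fin 2) ![b, a] = some e) :=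
  stmt5_general P homega e hneut he a ha b
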